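/- arXiv:1504.05431 — 5 statements merged into one kernel-verified Lean document; each statement's English description precedes it below -/
import Mathlib

section
/- Let K be a finite field, V = K^m, and let E be a fixed w-dimensional subspace of V, with w ≤ r ≤ m. Then (number of r-dimensional subspaces F of V with E ≤ F) × (number of w-dimensional subspaces of K^m) = (number of r-dimensional subspaces of K^m) × (number of w-dimensional subspaces of K^r). Equivalently, a uniformly random r-dimensional subspace F of V contains E with probability [r choose w]_q / [m choose w]_q. -/
open Module

section Aux

variable {K : Type*} [Field K]

private lemma nat_card_sigma_const {ι : Type*} [Finite ι] {f : ι → Type*} [∀ i, Finite (f i)]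
    (c : ℕ) (h : ∀ i, Nat.card (f i) = c) : Nat.card (Σ i, f i) = Nat.card ι * c := by
  cases nonempty_fintype ι
  letI : ∀ i, Fintype (f i) := fun i => Fintype.ofFinite _
  simp only [Nat.card_eq_fintype_card, Fintype.card_sigma]
  have : ∀ i, Fintype.card (f i) = c := fun i => by rw [← Nat.card_eq_fintype_card, h i]
  simp [this, Finset.sum_const]

private lemma card_dim_eq {M N : Type*} [AddCommGroup M] [Module K M]
    [AddCommGroup N] [Module K N] (e : M ≃ₗ[K] N) (d : ℕ) :
    Nat.card {W : Submodule K M // finrank K W = d} =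
      Nat.card {W : Submodule K N // finrank K W = d} :=
  Nat.card_congr <| (Submodule.orderIsoMapComap e).toEquiv.subtypeEquiv fun W => by
    have h : finrank K (W.map (e : M →ₗ[K] N)) = finrank K W := LinearEquiv.finrank_map_eq e W
    have hdef : Submodule.orderIsoMapComap e W = W.map (e : M →ₗ[K] N) := rfl
    simp only [RelIso.coe_fn_toEquiv, Submodule.orderIsoMapComap_apply]
    change finrank K W = d ↔ finrank K (W.map (e : M →ₗ[K] N)) = d
    rw [h]

private lemma exists_automorphism {V : Type*} [AddCommGroup V] [Module K V]
    [FiniteDimensional K V] (E E' : Submodule K V) (h : finrank K E = finrank K E') :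
    ∃ f : V ≃ₗ[K] V, E.map (f : V →ₗ[K] V) = E' := by
  obtain ⟨C, hC⟩ := Submodule.exists_isCompl E
  obtain ⟨C', hC'⟩ := Submodule.exists_isCompl E'
  have e1 : E ≃ₗ[K] E' := LinearEquiv.ofFinrankEq _ _ h
  have hc : finrank K C = finrank K C' := by
    have h1 := Submodule.finrank_add_eq_of_isCompl hC
    have h2 := Submodule.finrank_add_eq_of_isCompl hC'
    omega
  have e2 : C ≃ₗ[K] C' := LinearEquiv.ofFinrankEq _ _ hc
  set f : V ≃ₗ[K] V :=
    (Submodule.prodEquivOfIsCompl E C hC).symm.trans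
      ((e1.prodCongr e2).trans (Submodule.prodEquivOfIsCompl E' C' hC'))
  have key : ∀ y : E, f (y : V) = ↑(e1 y) := by
    intro y
    simp only [f, LinearEquiv.trans_apply, Submodule.prodEquivOfIsCompl_symm_apply_left]
    simp [Submodule.coe_prodEquivOfIsCompl', LinearEquiv.prodCongr_apply]
  refine ⟨f, ?_⟩
  have hle : E.map (f : V →ₗ[K] V) ≤ E' := by
    rintro y ⟨x, hx, rfl⟩
    show f x ∈ E'
    rw [show x = ((⟨x, hx⟩ : E) : V) from rfl, key]
    exact (e1 ⟨x, hx⟩).2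
  refine Submodule.eq_of_le_of_finrank_eq hle ?_
  rw [LinearEquiv.finrank_map_eq, h]

end Aux

/-- Over a finite field `K`, for a fixed `w`-dimensional subspace `E` of `K^m`
and `w ≤ r ≤ m`:
`#{F : dim F = r, E ≤ F} * #{subspaces of K^m of dim w}
  = #{subspaces of K^m of dim r} * #{subspaces of K^r of dim w}`,
i.e. a uniformly random `r`-dimensional subspace `F` contains `E` with probability
`[r choose w]_q / [m choose w]_q`. -/
theorem stmt3 (K : Type*) [Field K] [Fintype K] (m w r : ℕ)
    (E : Submodule K (Fin m → K)) (hw : Module.finrank K E = w)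
    (hwr : w ≤ r) (hrm : r ≤ m) :
    Nat.card {F : Submodule K (Fin m → K) // E ≤ F ∧ Module.finrank K F = r} *
        Nat.card {W : Submodule K (Fin m → K) // Module.finrank K W = w} =
      Nat.card {F : Submodule K (Fin m → K) // Module.finrank K F = r} *
        Nat.card {W : Submodule K (Fin r → K) // Module.finrank K W = w} := by
  classical
  set V := Fin m → K
  haveI : Finite (Submodule K V) :=
    Finite.of_injective (fun p => (p : Set V)) SetLike.coe_injective
  -- the set of flags
  let S := {p : Submodule K V × Submodule K V // p.1 ≤ p.2 ∧
      finrank K p.1 = w ∧ finrank K p.2 = r}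
  -- fibration over W
  let eqW : S ≃ Σ W : {W : Submodule K V // finrank K W = w},
      {F : Submodule K V // W.1 ≤ F ∧ finrank K F = r} :=
    { toFun := fun p => ⟨⟨p.1.1, p.2.2.1⟩, ⟨p.1.2, p.2.1, p.2.2.2⟩⟩
      invFun := fun q => ⟨⟨q.1.1, q.2.1⟩, q.2.2.1, q.1.2, q.2.2.2⟩
      left_inv := fun p => rfl
      right_inv := fun q => rfl }
  -- fibration over F
  let eqF : S ≃ Σ F : {F : Submodule K V // finrank K F = r},
      {W : Submodule K V // W ≤ F.1 ∧ finrank K W = w} :=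
    { toFun := fun p => ⟨⟨p.1.2, p.2.2.2⟩, ⟨p.1.1, p.2.1, p.2.2.1⟩⟩
      invFun := fun q => ⟨⟨q.2.1, q.1.1⟩, q.2.2.1, q.2.2.2, q.1.2⟩
      left_inv := fun p => rfl
      right_inv := fun q => rfl }
  -- constant fiber over W
  have hfibW : ∀ W : {W : Submodule K V // finrank K W = w},
      Nat.card {F : Submodule K V // W.1 ≤ F ∧ finrank K F = r} =
      Nat.card {F : Submodule K V // E ≤ F ∧ finrank K F = r} := by
    intro ⟨W, hW⟩
    obtain ⟨f, hf⟩ := exists_automorphism W E (by rw [hW, hw])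
    refine Nat.card_congr ((Submodule.orderIsoMapComap f).toEquiv.subtypeEquiv fun F => ?_)
    have hrk : finrank K (F.map (f : V →ₗ[K] V)) = finrank K F := LinearEquiv.finrank_map_eq f F
    have hdef : ∀ G : Submodule K V, Submodule.orderIsoMapComap f G = G.map (f : V →ₗ[K] V) := fun _ => rfl
    simp only [RelIso.coe_fn_toEquiv, Submodule.orderIsoMapComap_apply]
    change W ≤ F ∧ finrank K F = r ↔ E ≤ F.map (f : V →ₗ[K] V) ∧ finrank K (F.map (f : V →ₗ[K] V)) = r
    rw [hrk]
    constructor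
    · rintro ⟨h1, h2⟩
      exact ⟨hf ▸ Submodule.map_mono h1, h2⟩
    · rintro ⟨h1, h2⟩
      rw [← hf] at h1
      refine ⟨fun x hx => ?_, h2⟩
      have : f x ∈ F.map (f : V →ₗ[K] V) := h1 ⟨x, hx, rfl⟩
      obtain ⟨y, hy, hyx⟩ := this
      rwa [show y = x from f.injective hyx] at hy
  -- constant fiber over F
  have hfibF : ∀ F : {F : Submodule K V // finrank K F = r},
      Nat.card {W : Submodule K V // W ≤ F.1 ∧ finrank K W = w} =
      Nat.card {W : Submodule K (Fin r → K) // finrank K W = w} := by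
    intro ⟨F, hF⟩
    have e : F ≃ₗ[K] (Fin r → K) :=
      LinearEquiv.ofFinrankEq _ _ (by rw [hF, Module.finrank_fin_fun])
    rw [← card_dim_eq e w]
    have key : ∀ W : Submodule K V, W ≤ F → finrank K (W.comap F.subtype) = finrank K W := by
      intro W hWF
      conv_rhs => rw [← show Submodule.map F.subtype (W.comap F.subtype) = W by
        rw [Submodule.map_comap_subtype, inf_eq_right.2 hWF]]
      exact (Submodule.finrank_map_subtype_eq F _).symm
    refine Nat.card_congr ?_
    exact
    { toFun := fun W => ⟨W.1.comap F.subtype, by rw [key _ W.2.1, W.2.2]⟩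
      invFun := fun Q => ⟨Q.1.map F.subtype, Submodule.map_subtype_le F Q.1,
        (Submodule.finrank_map_subtype_eq F Q.1).trans Q.2⟩
      left_inv := fun W => Subtype.ext <| by
        show Submodule.map F.subtype (Submodule.comap F.subtype W.1) = W.1
        rw [Submodule.map_comap_subtype, inf_eq_right.2 W.2.1]
      right_inv := fun Q => Subtype.ext <| by
        show Submodule.comap F.subtype (Submodule.map F.subtype Q.1) = Q.1
        exact Submodule.comap_map_eq_of_injective F.injective_subtype Q.1 }
  have h1 := nat_card_sigma_const (f := fun W : {W : Submodule K V // finrank K W = w} =>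
      {F : Submodule K V // W.1 ≤ F ∧ finrank K F = r})
      (Nat.card {F : Submodule K V // E ≤ F ∧ finrank K F = r}) hfibW
  have h2 := nat_card_sigma_const (f := fun F : {F : Submodule K V // finrank K F = r} =>
      {W : Submodule K V // W ≤ F.1 ∧ finrank K W = w})
      (Nat.card {W : Submodule K (Fin r → K) // finrank K W = w}) hfibF
  have key := (Nat.card_congr eqW).symm.trans (Nat.card_congr eqF)
  rw [h1, h2] at key
  rw [mul_comm]
  exact key
end

section
/- Let K be a field, L a field extension of K, and g ∈ K[X] a monic polynomial with image g' ∈ L[X]. For a tuple c = (c_1, …, c_ℓ) of polynomials in L[X], define its rank to be the K-dimension of the K-span of the set of all coefficients (in L) of all components c_i, and define Π(c) = (c_1 mod g', …, c_ℓ mod g'). Then rank(Π(c)) ≤ rank(c). (This is the statement that projecting a codeword of a cellular code over L[X]/(f) with respect to a divisor g ∈ K[X] of f does not increase its rank weight.) -/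
/-- For `K ⊆ L` fields, `g ∈ K[X]` monic with image `g' ∈ L[X]`, and a tuple
`c : Fin ℓ → L[X]`, the rank weight (the `K`-dimension of the `K`-span of all coefficients of
all components) of the projected tuple `(c_1 %ₘ g', …, c_ℓ %ₘ g')` is at most the rank weight
of `c`. -/
theorem stmt11 (K L : Type*) [Field K] [Field L] [Algebra K L]
    (g : Polynomial K) (hg : g.Monic) (ℓ : ℕ) (c : Fin ℓ → Polynomial L) :
    Module.finrank K
        (Submodule.span K (⋃ i : Fin ℓ, Set.range (c i %ₘ g.map (algebraMap K L)).coeff)) ≤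
      Module.finrank K (Submodule.span K (⋃ i : Fin ℓ, Set.range (c i).coeff)) := by
  classical
  set φ := algebraMap K L
  set g' := g.map φ with hg'
  set M := Submodule.span K (⋃ i : Fin ℓ, Set.range (c i).coeff) with hM
  have hg'm : g'.Monic := hg.map φ
  -- finiteness of the generating set
  have hfin : (⋃ i : Fin ℓ, Set.range (c i).coeff).Finite := by
    refine Set.finite_iUnion fun i => ?_
    have : Set.range (c i).coeff ⊆
        insert (0 : L) ((c i).support.image (c i).coeff : Finset L) := by
      rintro x ⟨k, rfl⟩
      by_cases hk : k ∈ (c i).support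
      · exact Set.mem_insert_iff.mpr (Or.inr (by
          simp only [Finset.coe_image, Set.mem_image, Finset.mem_coe]
          exact ⟨k, hk, rfl⟩))
      · simp [Polynomial.notMem_support_iff.mp hk]
    exact Set.Finite.subset (Set.toFinite _) this
  haveI : Module.Finite K M := FiniteDimensional.span_of_finite K hfin
  -- every coefficient of `c i %ₘ g'` lies in `M`
  have hmem : ∀ (i : Fin ℓ) (k : ℕ), (c i %ₘ g').coeff k ∈ M := by
    intro i k
    have hdec : c i %ₘ g' =
        ∑ j ∈ Finset.range ((c i).natDegree + 1),
          (c i).coeff j • ((Polynomial.X ^ j %ₘ g).map φ) := by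
      conv_lhs => rw [(c i).as_sum_range_C_mul_X_pow]
      have : ∀ p : Polynomial L, p %ₘ g' = Polynomial.modByMonicHom g' p := fun p => rfl
      rw [this, map_sum]
      refine Finset.sum_congr rfl fun j _ => ?_
      rw [← this, Polynomial.C_mul', Polynomial.smul_modByMonic,
        Polynomial.map_modByMonic φ hg]
      simp [g']
    rw [hdec, Polynomial.finset_sum_coeff]
    refine Submodule.sum_mem M fun j _ => ?_
    have h1 : ((c i).coeff j • (Polynomial.X ^ j %ₘ g).map φ).coeff k
        = ((Polynomial.X ^ j %ₘ g).coeff k) • ((c i).coeff j) := by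
      rw [Polynomial.coeff_smul, Polynomial.coeff_map, smul_eq_mul, Algebra.smul_def, mul_comm]
    rw [h1]
    refine Submodule.smul_mem M _ (Submodule.subset_span ?_)
    exact Set.mem_iUnion.mpr ⟨i, ⟨j, rfl⟩⟩
  have hle : Submodule.span K (⋃ i : Fin ℓ, Set.range (c i %ₘ g').coeff) ≤ M := by
    rw [Submodule.span_le]
    rintro x hx
    simp only [Set.mem_iUnion, Set.mem_range] at hx
    obtain ⟨i, k, rfl⟩ := hx
    exact hmem i k
  exact Submodule.finrank_mono hle
end

section
/- Let K be a field and L a field extension of K of finite degree m. Let C be an L-subspace of L^{2k}, and let φ : L^{2k} → L^2 be the L-linear folding map defined by φ(c) = (Σ_{0 ≤ i < k} c_i, Σ_{k ≤ i < 2k} c_i). Suppose there exists c ∈ C whose rank weight (the K-dimension of the K-span of its coordinates) equals d and with φ(c) ≠ 0, and suppose the image φ(C) has L-dimension 1. Then for every c' = (c'_1, c'_2) ∈ φ(C) there exists a codeword c₀ ∈ C of rank weight d such that both c'_1 and c'_2 belong to the K-span of the coordinates of c₀. -/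
/-- Let `C` be an `L`-subspace of `L^(2k)` and `φ : L^(2k) → L^2` the folding
map `c ↦ (Σ_{i<k} c_i, Σ_{k ≤ i} c_i)`. If `C` contains a codeword `c` of rank weight `d`
with `φ c ≠ 0` and `φ(C)` has `L`-dimension `1`, then every `c' ∈ φ(C)` satisfies: there is a
codeword `c₀ ∈ C` of rank weight `d` such that both coordinates of `c'` lie in the `K`-span
of the coordinates of `c₀`. -/
theorem stmt15 (K L : Type*) [Field K] [Field L] [Algebra K L] [FiniteDimensional K L]
    (k d : ℕ) (C : Submodule L (Fin (2 * k) → L))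
    (φ : (Fin (2 * k) → L) →ₗ[L] (Fin 2 → L))
    (hφ : ∀ c : Fin (2 * k) → L,
      φ c = ![∑ i ∈ Finset.univ.filter (fun i : Fin (2 * k) => (i : ℕ) < k), c i,
              ∑ i ∈ Finset.univ.filter (fun i : Fin (2 * k) => k ≤ (i : ℕ)), c i])
    (hc : ∃ c ∈ C, Module.finrank K (Submodule.span K (Set.range c)) = d ∧ φ c ≠ 0)
    (hdim : Module.finrank L (Submodule.map φ C) = 1) :
    ∀ c' ∈ Submodule.map φ C, ∃ c₀ ∈ C,
      Module.finrank K (Submodule.span K (Set.range c₀)) = d ∧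
      c' 0 ∈ Submodule.span K (Set.range c₀) ∧ c' 1 ∈ Submodule.span K (Set.range c₀) := by
  obtain ⟨c, hcC, hrank, hφc⟩ := hc
  intro c' hc'
  -- the image is spanned by φ c
  set W := Submodule.map φ C with hW
  let w : W := ⟨φ c, Submodule.mem_map_of_mem hcC⟩
  have hw : w ≠ 0 := by
    intro h
    exact hφc (congrArg Subtype.val h)
  have hspan : Submodule.span L {w} = ⊤ :=
    (finrank_eq_one_iff_of_nonzero w hw).mp hdim
  have : (⟨c', hc'⟩ : W) ∈ Submodule.span L {w} := hspan ▸ Submodule.mem_top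
  obtain ⟨a, ha⟩ := Submodule.mem_span_singleton.mp this
  have hca : c' = a • φ c := by
    have := congrArg Subtype.val ha
    simpa using this.symm
  by_cases h0 : a = 0
  · refine ⟨c, hcC, hrank, ?_, ?_⟩ <;>
    · rw [hca, h0, zero_smul]
      exact Submodule.zero_mem _
  · refine ⟨a • c, Submodule.smul_mem _ _ hcC, ?_, ?_, ?_⟩
    · -- rank preserved under multiplication by nonzero scalar
      let e : L ≃ₗ[K] L := LinearEquiv.ofLinear
        (LinearMap.mulLeft K a) (LinearMap.mulLeft K a⁻¹)
        (by ext x; simp [← mul_assoc, mul_inv_cancel₀ h0])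
        (by ext x; simp [← mul_assoc, inv_mul_cancel₀ h0])
      have hrange : Set.range (a • c) = (fun x => a * x) '' Set.range c := by
        ext x
        simp [Set.range, Pi.smul_apply, smul_eq_mul, eq_comm]
      have : Submodule.span K (Set.range (a • c)) =
          Submodule.map (e : L →ₗ[K] L) (Submodule.span K (Set.range c)) := by
        rw [Submodule.map_span, hrange]
        congr 1
      rw [this, LinearEquiv.finrank_map_eq]
      exact hrank
    · have : c' 0 = φ (a • c) 0 := by rw [map_smul, ← hca]
      rw [this, hφ (a • c)]
      simp only [Matrix.cons_val_zero]
      exact Submodule.sum_mem _ fun i _ => Submodule.subset_span ⟨i, rfl⟩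
    · have : c' 1 = φ (a • c) 1 := by rw [map_smul, ← hca]
      rw [this, hφ (a • c)]
      simp only [Matrix.cons_val_one, Matrix.head_cons, Matrix.cons_val_zero]
      exact Submodule.sum_mem _ fun i _ => Submodule.subset_span ⟨i, rfl⟩
end

section
/- Let K be a field, C a K-subspace of the space of m × n matrices over K, A an m × n matrix over K, and w a natural number. Assume C contains no matrix of rank w. Then there exists c ∈ C with rank(A − c) = w if and only if the subspace C' generated by C and A (i.e., C ⊔ K·A) contains a matrix of rank w. In other words, decoding an error of weight w in an [m × n, K-dim] matrix code reduces to finding a codeword of rank weight w in a matrix code of one larger dimension. -/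
lemma rank_smul_aux {K : Type*} [Field K] {m n : ℕ} (k : K) (hk : k ≠ 0)
    (M : Matrix (Fin m) (Fin n) K) : (k • M).rank = M.rank := by
  unfold Matrix.rank
  have : (k • M).mulVecLin = k • M.mulVecLin := by
    ext v i; simp [Matrix.mulVecLin, Matrix.mulVec, dotProduct, Finset.mul_sum, mul_assoc, Pi.single_apply, mul_ite, Finset.sum_ite_eq]
  rw [this, LinearMap.range_smul _ _ hk]

/-- Let `C` be a `K`-subspace of `m × n` matrices containing no matrix of rank
`w`, and `A` a matrix. Then there is `c ∈ C` with `rank (A - c) = w` iff the subspace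
`C ⊔ span {A}` contains a matrix of rank `w`: decoding an error of weight `w` reduces to
finding a rank-`w` codeword in a matrix code of one larger dimension. -/
theorem stmt16 (K : Type*) [Field K] (m n w : ℕ)
    (C : Submodule K (Matrix (Fin m) (Fin n) K))
    (A : Matrix (Fin m) (Fin n) K)
    (hC : ∀ c ∈ C, c.rank ≠ w) :
    (∃ c ∈ C, (A - c).rank = w) ↔
      ∃ c' ∈ C ⊔ Submodule.span K {A}, Matrix.rank c' = w := by
  constructor
  · rintro ⟨c, hc, hr⟩
    refine ⟨A - c, ?_, hr⟩
    rw [sub_eq_add_neg, add_comm]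
    exact Submodule.add_mem_sup (C.neg_mem hc) (Submodule.mem_span_singleton_self A)
  · rintro ⟨c', hc', hr⟩
    rw [Submodule.mem_sup] at hc'
    obtain ⟨c, hc, a, ha, rfl⟩ := hc'
    rw [Submodule.mem_span_singleton] at ha
    obtain ⟨k, rfl⟩ := ha
    rcases eq_or_ne k 0 with rfl | hk
    · simp only [zero_smul, add_zero] at hr
      exact absurd hr (hC c hc)
    · refine ⟨-(k⁻¹ • c), C.neg_mem (C.smul_mem _ hc), ?_⟩
      have : A - -(k⁻¹ • c) = k⁻¹ • (c + k • A) := by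
        rw [smul_add, smul_smul, inv_mul_cancel₀ hk, one_smul]
        abel
      rw [this, rank_smul_aux _ (inv_ne_zero hk), hr]
end

section
/- Let K be a field, and let m, n be positive integers with m dividing n. For every polynomial a ∈ K[X] of degree less than n and every b < m, the b-th coefficient of the remainder of a modulo X^m − 1 equals Σ_{s=0}^{n/m − 1} a_{b + s·m}, where a_i denotes the i-th coefficient of a. In other words, projecting a cellular code with respect to the divisor X^m − 1 of X^n − 1 coincides with folding of order m: each coefficient of the projection is the sum of the coefficients lying in the same residue class modulo m. -/
open Polynomial Finset

/-- For `m ∣ n`, `m > 0`, a polynomial `a ∈ K[X]` of degree `< n` and `b < m`,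
the `b`-th coefficient of `a %ₘ (X^m - 1)` is `Σ_{s < n/m} a.coeff (b + s m)`: projecting
with respect to the divisor `X^m - 1` of `X^n - 1` coincides with folding of order `m`. -/
theorem stmt17 (K : Type*) [Field K] (m n : ℕ) (hm : 0 < m) (hmn : m ∣ n)
    (a : Polynomial K) (ha : a.natDegree < n) (b : ℕ) (hb : b < m) :
    (a %ₘ (Polynomial.X ^ m - 1)).coeff b =
      ∑ s ∈ Finset.range (n / m), a.coeff (b + s * m) := by
  set p : K[X] := X ^ m - 1 with hp
  have hmonic : p.Monic := by
    have := monic_X_pow_sub_C (R := K) (1 : K) hm.ne'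
    simpa [hp] using this
  set r : K[X] := ∑ i ∈ range n, Polynomial.monomial (i % m) (a.coeff i) with hr
  -- a %ₘ p = r %ₘ p
  have key : a %ₘ p = r %ₘ p := by
    apply Polynomial.modByMonic_eq_of_dvd_sub hmonic
    have haeq : a = ∑ i ∈ range n, Polynomial.monomial i (a.coeff i) :=
      a.as_sum_range' n ha
    rw [haeq, hr, ← Finset.sum_sub_distrib]
    apply Finset.dvd_sum
    intro i _
    have : (Polynomial.monomial i (a.coeff i) : K[X]) -
        Polynomial.monomial (i % m) (a.coeff i) =
        Polynomial.monomial (i % m) (a.coeff i) * (((X : K[X]) ^ m) ^ (i / m) - 1) := by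
      rw [mul_sub, mul_one, ← pow_mul, Polynomial.monomial_mul_X_pow]
      rw [Nat.mod_add_div]
    rw [this]
    exact Dvd.dvd.mul_left (by simpa using sub_dvd_pow_sub_pow ((X : K[X]) ^ m) 1 (i / m)) _
  -- r has degree < m so r %ₘ p = r
  have hrself : r %ₘ p = r := by
    rw [Polynomial.modByMonic_eq_self_iff hmonic]
    have hdegp : p.degree = (m : ℕ) := by
      have := degree_X_pow_sub_C (R := K) hm (1 : K)
      simpa [hp] using this
    rw [hdegp]
    apply lt_of_le_of_lt (Polynomial.degree_sum_le _ _)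
    apply Finset.sup_lt_iff (by exact_mod_cast WithBot.bot_lt_coe m) |>.mpr
    intro i _
    exact lt_of_le_of_lt (Polynomial.degree_monomial_le _ _)
      (by exact_mod_cast Nat.mod_lt i hm)
  rw [key, hrself, hr, Polynomial.finset_sum_coeff]
  simp only [Polynomial.coeff_monomial]
  rw [← Finset.sum_filter]
  refine Finset.sum_nbij' (fun i => i / m) (fun s => b + s * m) ?_ ?_ ?_ ?_ ?_
  · intro i hi
    simp only [Finset.mem_filter, Finset.mem_range] at hi
    simp only [Finset.mem_range]
    obtain ⟨k, rfl⟩ := hmn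
    rw [Nat.mul_div_cancel_left _ hm]
    exact Nat.div_lt_of_lt_mul hi.1
  · intro s hs
    simp only [Finset.mem_range] at hs
    simp only [Finset.mem_filter, Finset.mem_range]
    refine ⟨?_, by simp [Nat.add_mul_mod_self_right, Nat.mod_eq_of_lt hb]⟩
    obtain ⟨k, rfl⟩ := hmn
    rw [Nat.mul_div_cancel_left _ hm] at hs
    have h1 : s + 1 ≤ k := hs
    calc b + s * m < m + s * m := by omega
      _ = (s + 1) * m := by ring
      _ ≤ k * m := Nat.mul_le_mul_right m h1
      _ = m * k := mul_comm _ _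
  · intro i hi
    simp only [Finset.mem_filter, Finset.mem_range] at hi
    rw [← hi.2]
    exact Nat.mod_add_div' i m
  · intro s _
    rw [Nat.add_mul_div_right _ _ hm, Nat.div_eq_of_lt hb, zero_add]
  · intro i hi
    simp only [Finset.mem_filter, Finset.mem_range] at hi
    congr 1
    rw [← hi.2]
    exact (Nat.mod_add_div' i m).symm
end
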